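/- arXiv:math/9606206 — 8 statements merged into one kernel-verified Lean document; each statement's English description precedes it below -/
import Mathlib

section
/- Let X be a Hausdorff topological space, let γ : [0,1] → X be an injective path, let s, t ∈ [0,1], and let δ : [0,1] → X be an injective path with δ 0 = γ s, δ 1 = γ t, and range δ ⊆ range γ. Then range δ = γ '' Set.uIcc s t, i.e. the range of δ is exactly the image under γ of the closed interval between s and t. (This is the uniqueness underlying the paper's Axiom of Stability D 0.4 for fundamental lines: within a given fundamental line there is exactly one fundamental line with two given end-points.) -/
/-- The uniqueness underlying the paper's Axiom of Stability D 0.4 for fundamental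
lines: within a given fundamental line there is exactly one fundamental line with two
given end-points; its point set is the image of the parameter interval between the
parameters of the end-points. -/
theorem subarc_unique {X : Type*} [TopologicalSpace X] [T2Space X]
    (γ : unitInterval → X) (hc : Continuous γ) (hi : Function.Injective γ)
    (s t : unitInterval)
    (δ : unitInterval → X) (hδc : Continuous δ) (hδi : Function.Injective δ)
    (h0 : δ 0 = γ s) (h1 : δ 1 = γ t) (hsub : Set.range δ ⊆ Set.range γ) :
    Set.range δ = γ '' Set.uIcc s t := by
  haveI : Fact ((0:ℝ) ≤ 1) := ⟨zero_le_one⟩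
  have hγe : Topology.IsClosedEmbedding γ := hc.isClosedEmbedding hi
  set f : unitInterval → unitInterval := fun x => Function.invFun γ (δ x) with hf
  have hγf : ∀ x, γ (f x) = δ x := fun x =>
    Function.invFun_eq (hsub (Set.mem_range_self x))
  have hfc : Continuous f := by
    rw [hγe.isEmbedding.continuous_iff]
    have : γ ∘ f = δ := funext hγf
    rw [this]; exact hδc
  have hfi : Function.Injective f := fun a b hab => by
    apply hδi; rw [← hγf a, ← hγf b, hab]
  have hf0 : f 0 = s := hi (by rw [hγf, h0])
  have hf1 : f 1 = t := hi (by rw [hγf, h1])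
  have hrange : Set.range f = Set.uIcc s t := by
    apply Set.Subset.antisymm
    · rcases hfc.strictMono_of_inj_boundedOrder' hfi with hm | hm
      · rintro _ ⟨x, rfl⟩
        rw [← hf0, ← hf1]
        exact Set.mem_uIcc.2 (Or.inl ⟨hm.monotone bot_le, hm.monotone le_top⟩)
      · rintro _ ⟨x, rfl⟩
        rw [← hf0, ← hf1]
        exact Set.mem_uIcc.2 (Or.inr ⟨hm.antitone le_top, hm.antitone bot_le⟩)
    · rw [← hf0, ← hf1]
      intro y hy
      obtain ⟨x, _, hx⟩ := intermediate_value_uIcc (a := 0) (b := 1)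
        hfc.continuousOn hy
      exact ⟨x, hx⟩
  have : δ = γ ∘ f := by funext x; simp [Function.comp, hγf]
  rw [this, Set.range_comp, hrange]
end

section
/- Let X be a topological space, let γ : [0,1] → X be an injective path, and let A, B, C be three pairwise distinct points of range γ. Then at least one of the three is between the other two within range γ; that is, A is between B and C within range γ, or B is between A and C within range γ, or C is between A and B within range γ. (Paper's Theorem 1.5: one point of any three different points within a fundamental line is between the other two, within that line.) -/
/-- `B` is between `A` and `C` within `S` (the paper's Interpretation 1.2): there are
injective paths from `A` to `B` and from `B` to `C`, each with range contained in `S`,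
whose ranges intersect exactly in `{B}`. -/
def IsBetweenWithin {X : Type*} [TopologicalSpace X] (S : Set X) (A B C : X) : Prop :=
  ∃ δ₁ δ₂ : unitInterval → X,
    Continuous δ₁ ∧ Function.Injective δ₁ ∧
    Continuous δ₂ ∧ Function.Injective δ₂ ∧
    δ₁ 0 = A ∧ δ₁ 1 = B ∧ δ₂ 0 = B ∧ δ₂ 1 = C ∧
    Set.range δ₁ ⊆ S ∧ Set.range δ₂ ⊆ S ∧
    Set.range δ₁ ∩ Set.range δ₂ = {B}

namespace BetweenAux

/-- The affine segment path in the unit interval from `u` to `v`. -/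
noncomputable def seg (u v : unitInterval) (x : unitInterval) : unitInterval :=
  ⟨(1 - (x : ℝ)) * u + (x : ℝ) * v, by
    constructor
    · nlinarith [x.2.1, x.2.2, u.2.1, v.2.1]
    · nlinarith [x.2.1, x.2.2, u.2.2, v.2.2]⟩

lemma seg_coe (u v x : unitInterval) :
    (seg u v x : ℝ) = (1 - (x : ℝ)) * u + (x : ℝ) * v := rfl

lemma seg_continuous (u v : unitInterval) : Continuous (seg u v) := by
  apply Continuous.subtype_mk
  continuity

lemma seg_zero (u v : unitInterval) : seg u v 0 = u := by
  apply Subtype.ext; simp [seg_coe]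

lemma seg_one (u v : unitInterval) : seg u v 1 = v := by
  apply Subtype.ext; simp [seg_coe]

lemma seg_injective {u v : unitInterval} (huv : u ≠ v) :
    Function.Injective (seg u v) := by
  intro x y hxy
  have h := congrArg (Subtype.val) hxy
  simp only [seg_coe] at h
  have hvu : (v : ℝ) - u ≠ 0 := by
    intro h0
    exact huv (Subtype.ext (by linarith))
  apply Subtype.ext
  have : (x : ℝ) * ((v : ℝ) - u) = (y : ℝ) * ((v : ℝ) - u) := by ring_nf; nlinarith [h]
  exact mul_right_cancel₀ hvu this

lemma seg_mem_uIcc (u v x : unitInterval) : seg u v x ∈ Set.uIcc u v := by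
  rcases le_total u v with h | h
  · rw [Set.uIcc_of_le h]
    have hr : (u : ℝ) ≤ v := h
    constructor
    · rw [← Subtype.coe_le_coe, seg_coe]; nlinarith [x.2.1, x.2.2]
    · rw [← Subtype.coe_le_coe, seg_coe]; nlinarith [x.2.1, x.2.2]
  · rw [Set.uIcc_of_ge h]
    have hr : (v : ℝ) ≤ u := h
    constructor
    · rw [← Subtype.coe_le_coe, seg_coe]; nlinarith [x.2.1, x.2.2]
    · rw [← Subtype.coe_le_coe, seg_coe]; nlinarith [x.2.1, x.2.2]

lemma isBetween_of_mem_uIcc {X : Type*} [TopologicalSpace X]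
    (γ : unitInterval → X) (hc : Continuous γ) (hi : Function.Injective γ)
    (a b c : unitInterval) (hab : a ≠ b) (hbc : b ≠ c) (hmid : b ∈ Set.uIcc a c) :
    IsBetweenWithin (Set.range γ) (γ a) (γ b) (γ c) := by
  refine ⟨γ ∘ seg a b, γ ∘ seg b c,
    hc.comp (seg_continuous a b), hi.comp (seg_injective hab),
    hc.comp (seg_continuous b c), hi.comp (seg_injective hbc),
    by simp [Function.comp, seg_zero], by simp [Function.comp, seg_one],
    by simp [Function.comp, seg_zero], by simp [Function.comp, seg_one],
    ?_, ?_, ?_⟩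
  · rw [Set.range_comp]; exact Set.image_subset_range _ _
  · rw [Set.range_comp]; exact Set.image_subset_range _ _
  · apply Set.Subset.antisymm
    · rintro y ⟨⟨x, hx⟩, ⟨z, hz⟩⟩
      simp only [Function.comp] at hx hz
      have hp : seg a b x = seg b c z := hi (hx.trans hz.symm)
      have h1 := Set.mem_uIcc.1 (seg_mem_uIcc a b x)
      have h2 := Set.mem_uIcc.1 (seg_mem_uIcc b c z)
      rw [← hp] at h2
      have h3 := Set.mem_uIcc.1 hmid
      simp only [← Subtype.coe_le_coe] at h1 h2 h3
      have hb : seg a b x = b := by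
        apply Subtype.ext
        rcases h1 with ⟨u1, u2⟩ | ⟨u1, u2⟩ <;>
          rcases h2 with ⟨v1, v2⟩ | ⟨v1, v2⟩ <;>
          rcases h3 with ⟨w1, w2⟩ | ⟨w1, w2⟩ <;> linarith
      rw [← hx, hb]
      exact Set.mem_singleton _
    · rintro y rfl
      exact ⟨⟨1, by simp [Function.comp, seg_one]⟩, ⟨0, by simp [Function.comp, seg_zero]⟩⟩

lemma uIcc_trichotomy (a b c : unitInterval) :
    a ∈ Set.uIcc b c ∨ b ∈ Set.uIcc a c ∨ c ∈ Set.uIcc a b := by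
  rcases le_total a b with h1 | h1 <;> rcases le_total b c with h2 | h2 <;>
    rcases le_total a c with h3 | h3 <;> simp [Set.mem_uIcc] <;> tauto

end BetweenAux

/-- Paper's Theorem 1.5: one point of any three different points within a fundamental
line is between the other two, within that line. -/
theorem one_of_three_isBetween {X : Type*} [TopologicalSpace X]
    (γ : unitInterval → X) (hc : Continuous γ) (hi : Function.Injective γ)
    (A B C : X) (hA : A ∈ Set.range γ) (hB : B ∈ Set.range γ) (hC : C ∈ Set.range γ)
    (hAB : A ≠ B) (hAC : A ≠ C) (hBC : B ≠ C) :
    IsBetweenWithin (Set.range γ) B A C ∨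
    IsBetweenWithin (Set.range γ) A B C ∨
    IsBetweenWithin (Set.range γ) A C B := by
  obtain ⟨a, rfl⟩ := hA
  obtain ⟨b, rfl⟩ := hB
  obtain ⟨c, rfl⟩ := hC
  have hab : a ≠ b := fun h => hAB (by rw [h])
  have hac : a ≠ c := fun h => hAC (by rw [h])
  have hbc : b ≠ c := fun h => hBC (by rw [h])
  rcases BetweenAux.uIcc_trichotomy a b c with h | h | h
  · exact Or.inl (BetweenAux.isBetween_of_mem_uIcc γ hc hi b a c hab.symm hac h)
  · exact Or.inr (Or.inl (BetweenAux.isBetween_of_mem_uIcc γ hc hi a b c hab hbc h))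
  · exact Or.inr (Or.inr (BetweenAux.isBetween_of_mem_uIcc γ hc hi a c b hac hbc.symm h))
end

section
/- Let X be a Hausdorff topological space, let γ : [0,1] → X be an injective path, and let A, B, C be pairwise distinct points of range γ. If B is between A and C within range γ, then A is not between B and C within range γ, and C is not between A and B within range γ. (Paper's Theorem 1.6: if one point is between two others within a given fundamental line, then neither of the others is between the other two, within that line.) -/
open Set Function Topology

theorem Set.mem_uIcc_of_uIcc_inter_uIcc_eq_singleton {α : Type*} [LinearOrder α] {a b c : α}
    (h : uIcc a b ∩ uIcc b c = {b}) : b ∈ uIcc a c := by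
  -- otherwise the endpoint of `[a, c]` nearest to `b` is a second common point
  have hmin := Set.ext_iff.1 h (min a c)
  have hmax := Set.ext_iff.1 h (max a c)
  simp only [mem_inter_iff, mem_uIcc, mem_singleton_iff] at hmin hmax ⊢
  grind

theorem Continuous.range_eq_uIcc_of_injective {α δ : Type*} [ConditionallyCompleteLinearOrder α]
    [TopologicalSpace α] [OrderTopology α] [DenselyOrdered α] [BoundedOrder α]
    [LinearOrder δ] [TopologicalSpace δ] [OrderClosedTopology δ] {f : α → δ}
    (hf : Continuous f) (hi : Injective f) : range f = uIcc (f ⊥) (f ⊤) := by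
  refine Subset.antisymm ?_
    ((intermediate_value_uIcc hf.continuousOn).trans (image_subset_range _ _))
  rintro _ ⟨t, rfl⟩
  rcases hf.strictMono_of_inj_boundedOrder' hi with hm | hm
  · exact mem_uIcc_of_le (hm.monotone bot_le) (hm.monotone le_top)
  · exact mem_uIcc_of_ge (hm.antitone le_top) (hm.antitone bot_le)

theorem Topology.IsEmbedding.exists_continuous_comp_eq {Y Z X : Type*} [TopologicalSpace Y]
    [TopologicalSpace Z] [TopologicalSpace X] {γ : Y → X} (hγ : IsEmbedding γ) {δ : Z → X}
    (hδ : Continuous δ) (hr : range δ ⊆ range γ) : ∃ f : Z → Y, Continuous f ∧ γ ∘ f = δ := by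
  choose f hf using fun t => hr (mem_range_self t)
  have hfδ : γ ∘ f = δ := funext hf
  exact ⟨f, hγ.continuous_iff.2 (hfδ ▸ hδ), hfδ⟩

section EmbeddedLinearOrder

variable {α X : Type*} [LinearOrder α] [TopologicalSpace α] [OrderClosedTopology α]
  [TopologicalSpace X] {γ : α → X}

theorem range_eq_image_uIcc_of_isEmbedding (hγ : IsEmbedding γ) {δ : unitInterval → X}
    (hδ : Continuous δ) (hδi : Injective δ) (hr : range δ ⊆ range γ) {a b : α}
    (ha : δ 0 = γ a) (hb : δ 1 = γ b) : range δ = γ '' uIcc a b := by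
  obtain ⟨f, hf, rfl⟩ := hγ.exists_continuous_comp_eq hδ hr
  have hfa : f ⊥ = a := hγ.injective ha
  have hfb : f ⊤ = b := hγ.injective hb
  rw [range_comp, hf.range_eq_uIcc_of_injective hδi.of_comp, hfa, hfb]

theorem mem_uIcc_of_isBetweenWithin_range (hγ : IsEmbedding γ) {a b c : α}
    (h : IsBetweenWithin (range γ) (γ a) (γ b) (γ c)) : b ∈ uIcc a c := by
  obtain ⟨δ₁, δ₂, hc₁, hi₁, hc₂, hi₂, h₁0, h₁1, h₂0, h₂1, hr₁, hr₂, hinter⟩ := h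
  rw [range_eq_image_uIcc_of_isEmbedding hγ hc₁ hi₁ hr₁ h₁0 h₁1,
    range_eq_image_uIcc_of_isEmbedding hγ hc₂ hi₂ hr₂ h₂0 h₂1, ← image_inter hγ.injective,
    ← image_singleton] at hinter
  exact mem_uIcc_of_uIcc_inter_uIcc_eq_singleton (hγ.injective.image_injective hinter)

end EmbeddedLinearOrder

theorem isBetween_unique_general {X : Type*} [TopologicalSpace X] [T2Space X]
    (γ : unitInterval → X) (hc : Continuous γ) (hi : Function.Injective γ)
    (A B C : X) (hA : A ∈ Set.range γ) (hB : B ∈ Set.range γ) (hC : C ∈ Set.range γ)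
    (hAB : A ≠ B) (hBC : B ≠ C)
    (h : IsBetweenWithin (Set.range γ) A B C) :
    ¬ IsBetweenWithin (Set.range γ) B A C ∧
    ¬ IsBetweenWithin (Set.range γ) A C B := by
  have hγ : IsEmbedding γ := (hc.isClosedEmbedding hi).isEmbedding
  obtain ⟨a, rfl⟩ := hA
  obtain ⟨b, rfl⟩ := hB
  obtain ⟨c, rfl⟩ := hC
  have hb : b ∈ uIcc a c := mem_uIcc_of_isBetweenWithin_range hγ h
  refine ⟨fun h' => hAB ?_, fun h' => hBC ?_⟩
  · exact congrArg γ (eq_of_mem_uIcc_of_mem_uIcc (mem_uIcc_of_isBetweenWithin_range hγ h') hb)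
  · exact congrArg γ (eq_of_mem_uIcc_of_mem_uIcc' hb (mem_uIcc_of_isBetweenWithin_range hγ h'))

/-- Paper's Theorem 1.6: if one point is between two others within a given fundamental
line, then neither of the others is between the other two, within that line. -/
theorem isBetween_unique {X : Type*} [TopologicalSpace X] [T2Space X]
    (γ : unitInterval → X) (hc : Continuous γ) (hi : Function.Injective γ)
    (A B C : X) (hA : A ∈ Set.range γ) (hB : B ∈ Set.range γ) (hC : C ∈ Set.range γ)
    (hAB : A ≠ B) (hAC : A ≠ C) (hBC : B ≠ C)
    (h : IsBetweenWithin (Set.range γ) A B C) :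
    ¬ IsBetweenWithin (Set.range γ) B A C ∧
    ¬ IsBetweenWithin (Set.range γ) A C B :=
  isBetween_unique_general γ hc hi A B C hA hB hC hAB hBC h
end

section
/- Let X be a Hausdorff topological space, let γ : [0,1] → X be an injective path, and let P, Q be any points of range γ. Then γ 0 is not between P and Q within range γ, and γ 1 is not between P and Q within range γ. (Paper's Theorem 1.7: neither end-point of a fundamental line is ever between a pair of points of that line, within that line.) -/
open Set Topology

theorem IsBetweenWithin.of_image {X Y : Type*} [TopologicalSpace X] [TopologicalSpace Y]
    {e : Y → X} (he : IsEmbedding e) {S : Set Y} {a b c : Y}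
    (h : IsBetweenWithin (e '' S) (e a) (e b) (e c)) : IsBetweenWithin S a b c := by
  obtain ⟨δ₁, δ₂, hc₁, hi₁, hc₂, hi₂, h₁0, h₁1, h₂0, h₂1, hS₁, hS₂, hinter⟩ := h
  obtain ⟨η₁, rfl⟩ := range_subset_range_iff_exists_comp.1 (hS₁.trans (image_subset_range e S))
  obtain ⟨η₂, rfl⟩ := range_subset_range_iff_exists_comp.1 (hS₂.trans (image_subset_range e S))
  have range_subset : ∀ {η : unitInterval → Y}, range (e ∘ η) ⊆ e '' S → range η ⊆ S := by
    rintro η hη _ ⟨t, rfl⟩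
    exact he.injective.mem_set_image.1 (hη ⟨t, rfl⟩)
  refine ⟨η₁, η₂, he.continuous_iff.2 hc₁, hi₁.of_comp, he.continuous_iff.2 hc₂, hi₂.of_comp,
    he.injective h₁0, he.injective h₁1, he.injective h₂0, he.injective h₂1,
    range_subset hS₁, range_subset hS₂, he.injective.image_injective ?_⟩
  rw [image_inter he.injective, ← range_comp, ← range_comp, hinter, image_singleton]

theorem not_isBetweenWithin_bot {α : Type*} [LinearOrder α] [OrderBot α] [TopologicalSpace α]
    [OrderClosedTopology α] (S : Set α) (a c : α) : ¬ IsBetweenWithin S a ⊥ c := by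
  rintro ⟨δ₁, δ₂, hc₁, hi₁, hc₂, hi₂, rfl, h₁1, h₂0, rfl, -, -, hinter⟩
  have ha : ⊥ < δ₁ 0 := bot_lt_iff_ne_bot.2 (h₁1 ▸ hi₁.ne zero_ne_one)
  have hc : ⊥ < δ₂ 1 := bot_lt_iff_ne_bot.2 (h₂0 ▸ hi₂.ne one_ne_zero)
  have hm₁ : min (δ₁ 0) (δ₂ 1) ∈ range δ₁ :=
    intermediate_value_univ 1 0 hc₁ ⟨h₁1 ▸ bot_le, min_le_left _ _⟩
  have hm₂ : min (δ₁ 0) (δ₂ 1) ∈ range δ₂ :=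
    intermediate_value_univ 0 1 hc₂ ⟨h₂0 ▸ bot_le, min_le_right _ _⟩
  have hm : min (δ₁ 0) (δ₂ 1) ∈ ({⊥} : Set α) := hinter ▸ ⟨hm₁, hm₂⟩
  exact (lt_min ha hc).ne' hm

theorem not_isBetweenWithin_top {α : Type*} [LinearOrder α] [OrderTop α] [TopologicalSpace α]
    [OrderClosedTopology α] (S : Set α) (a c : α) : ¬ IsBetweenWithin S a ⊤ c :=
  not_isBetweenWithin_bot (α := αᵒᵈ) S a c

/-- Paper's Theorem 1.7: neither end-point of a fundamental line is ever between a
pair of points of that line, within that line. -/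
theorem endpoint_not_between {X : Type*} [TopologicalSpace X] [T2Space X]
    (γ : unitInterval → X) (hc : Continuous γ) (hi : Function.Injective γ)
    (P Q : X) (hP : P ∈ Set.range γ) (hQ : Q ∈ Set.range γ) :
    ¬ IsBetweenWithin (Set.range γ) P (γ 0) Q ∧
    ¬ IsBetweenWithin (Set.range γ) P (γ 1) Q := by
  obtain ⟨p, rfl⟩ := hP
  obtain ⟨q, rfl⟩ := hQ
  have he : IsEmbedding γ := (hc.isClosedEmbedding hi).isEmbedding
  rw [← image_univ]
  exact ⟨fun h => not_isBetweenWithin_bot univ p q (h.of_image he),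
    fun h => not_isBetweenWithin_top univ p q (h.of_image he)⟩
end

section
/- Let X be a topological space, let f : Circle → X be a continuous injective map, and let p, q be two distinct points of range f. Then there exist injective paths δ₁, δ₂ : [0,1] → X, each with initial point p and terminal point q, such that range δ₁ ∪ range δ₂ = range f and range δ₁ ∩ range δ₂ = {p, q}. (Paper's Theorem 1.8 and its Corollary: any pair of points within a ring are the end-points of a pair of fundamental lines which constitute that ring and have only those two points in common.) -/
set_option maxHeartbeats 1000000

open Real Set

private lemma circ_exp_inj_aux {t : ℝ} (ht : t ≠ 0) (hta : |t| < 2 * π)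
    {s s' : ℝ} (hs : s ∈ Icc (0:ℝ) 1) (hs' : s' ∈ Icc (0:ℝ) 1)
    (h : Circle.exp (s * t) = Circle.exp (s' * t)) : s = s' := by
  obtain ⟨m, hm⟩ := Circle.exp_eq_exp.1 h
  have h2 : |(m : ℝ)| * (2 * π) = |s - s'| * |t| := by
    rw [← abs_of_pos Real.two_pi_pos, ← abs_mul, ← abs_mul,
      show (s - s') * t = (m : ℝ) * (2 * π) by linarith]
  have hss : |s - s'| ≤ 1 := by
    rw [abs_le]; constructor <;> [linarith [hs.1, hs.2, hs'.1, hs'.2]; linarith [hs.1, hs.2, hs'.1, hs'.2]]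
  have hm0 : m = 0 := by
    by_contra hm0
    have : (1 : ℝ) ≤ |(m : ℝ)| := by
      have := Int.one_le_abs (by omega : m ≠ 0)
      exact_mod_cast (by exact_mod_cast this : (1:ℝ) ≤ |(m:ℝ)|)
    nlinarith [abs_nonneg t, abs_nonneg (s - s'), Real.two_pi_pos]
  rw [hm0] at hm
  simp at hm
  rcases hm with h | h
  · exact h
  · exact absurd h ht

private lemma circ_surj_aux {t : ℝ} (ht0 : 0 < t) (ht2 : t < 2 * π) (w : Circle) :
    (∃ s ∈ Icc (0:ℝ) 1, Circle.exp (s * t) = w) ∨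
    (∃ s ∈ Icc (0:ℝ) 1, Circle.exp (s * (t - 2 * π)) = w) := by
  set u : ℝ := Complex.arg w with hu
  have hexpu : Circle.exp u = w := Circle.exp_arg w
  set b : ℝ := toIocMod Real.two_pi_pos (t - 2 * π) u with hb
  have hbmem : b ∈ Ioc (t - 2 * π) (t - 2 * π + 2 * π) := toIocMod_mem_Ioc Real.two_pi_pos _ _
  have hexpb : Circle.exp b = w := by
    have hsub : u - b = toIocDiv Real.two_pi_pos (t - 2 * π) u • (2 * π) :=
      self_sub_toIocMod Real.two_pi_pos _ _
    rw [← hexpu]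
    refine Circle.exp_eq_exp.2 ⟨-(toIocDiv Real.two_pi_pos (t - 2 * π) u), ?_⟩
    push_cast
    rw [zsmul_eq_mul] at hsub
    linarith
  have hb1 : t - 2 * π < b := hbmem.1
  have hb2 : b ≤ t := by linarith [hbmem.2]
  rcases le_or_gt 0 b with hb0 | hb0
  · left
    refine ⟨b / t, ⟨div_nonneg hb0 ht0.le, (div_le_one ht0).2 hb2⟩, ?_⟩
    rw [div_mul_cancel₀ _ ht0.ne']
    exact hexpb
  · right
    have hne : t - 2 * π ≠ 0 := by linarith
    refine ⟨b / (t - 2 * π), ⟨?_, ?_⟩, ?_⟩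
    · exact div_nonneg_iff.2 (Or.inr ⟨hb0.le, by linarith⟩)
    · exact div_le_one_iff.2 (Or.inr (Or.inr ⟨by linarith, by linarith⟩))
    · rw [div_mul_cancel₀ _ hne]; exact hexpb


private lemma circ_inter_aux {t : ℝ} (ht0 : 0 < t) (ht2 : t < 2 * π)
    {s s' : ℝ} (hs : s ∈ Icc (0:ℝ) 1) (hs' : s' ∈ Icc (0:ℝ) 1)
    (h : Circle.exp (s * t) = Circle.exp (s' * (t - 2 * π))) :
    (s = 0 ∧ s' = 0) ∨ (s = 1 ∧ s' = 1) := by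
  obtain ⟨m, hm⟩ := Circle.exp_eq_exp.1 h
  obtain ⟨hs0, hs1⟩ := hs
  obtain ⟨hs'0, hs'1⟩ := hs'
  have h1 : 0 ≤ s * t := mul_nonneg hs0 ht0.le
  have h2 : s * t ≤ t := by nlinarith
  have h3 : s' * (t - 2 * π) ≤ 0 := mul_nonpos_of_nonneg_of_nonpos hs'0 (by linarith)
  have h4 : t - 2 * π ≤ s' * (t - 2 * π) := by nlinarith
  have hm01 : m = 0 ∨ m = 1 := by
    have l1 : (0:ℝ) ≤ (m:ℝ) * (2 * π) := by linarith
    have l2 : (m:ℝ) * (2 * π) ≤ 2 * π := by linarith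
    rw [mul_comm] at l1
    have m0 : (0:ℝ) ≤ (m:ℝ) := nonneg_of_mul_nonneg_right l1 Real.two_pi_pos
    have m1 : (m:ℝ) ≤ 1 := by nlinarith [Real.two_pi_pos]
    have : (0:ℤ) ≤ m := by exact_mod_cast m0
    have : m ≤ 1 := by exact_mod_cast m1
    omega
  rcases hm01 with rfl | rfl
  · left
    have e : s * t = 0 := le_antisymm (by push_cast at hm; linarith) h1
    have e' : s' * (t - 2 * π) = 0 := by push_cast at hm; linarith
    constructor
    · rcases mul_eq_zero.1 e with h | h
      · exact h
      · exact absurd h ht0.ne'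
    · rcases mul_eq_zero.1 e' with h | h
      · exact h
      · exact absurd h (by intro hh; linarith)
  · right
    push_cast at hm
    constructor
    · nlinarith
    · nlinarith

/-- Paper's Theorem 1.8 and its Corollary: any pair of points within a ring are the
end-points of a pair of fundamental lines which constitute that ring and have only
those two points in common. -/
theorem ring_split_two_arcs {X : Type*} [TopologicalSpace X]
    (f : Circle → X) (hc : Continuous f) (hi : Function.Injective f)
    (p q : X) (hp : p ∈ Set.range f) (hq : q ∈ Set.range f) (hpq : p ≠ q) :
    ∃ δ₁ δ₂ : unitInterval → X,
      Continuous δ₁ ∧ Function.Injective δ₁ ∧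
      Continuous δ₂ ∧ Function.Injective δ₂ ∧
      δ₁ 0 = p ∧ δ₁ 1 = q ∧ δ₂ 0 = p ∧ δ₂ 1 = q ∧
      Set.range δ₁ ∪ Set.range δ₂ = Set.range f ∧
      Set.range δ₁ ∩ Set.range δ₂ = {p, q} := by
  obtain ⟨a, rfl⟩ := hp
  obtain ⟨b, rfl⟩ := hq
  have hab : a ≠ b := fun h => hpq (by rw [h])
  have hc1 : a⁻¹ * b ≠ 1 := fun h => hab (inv_mul_eq_one.1 h)
  obtain ⟨t, ht0, ht2, hexpt⟩ : ∃ t : ℝ, 0 < t ∧ t < 2 * π ∧ Circle.exp t = a⁻¹ * b := by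
    have c := a⁻¹ * b
    set u : ℝ := Complex.arg ((a⁻¹ * b : Circle) : ℂ) with hu
    have hexpu : Circle.exp u = a⁻¹ * b := Circle.exp_arg (a⁻¹ * b)
    have hu1 : -π < u := Complex.neg_pi_lt_arg _
    have hu2 : u ≤ π := Complex.arg_le_pi _
    have hune : u ≠ 0 := by
      intro h
      rw [h, Circle.exp_zero] at hexpu
      exact hc1 hexpu.symm
    rcases lt_or_gt_of_ne hune with hneg | hpos
    · exact ⟨u + 2 * π, by nlinarith [Real.pi_pos], by nlinarith [Real.pi_pos],
        by rw [Circle.exp_add_two_pi]; exact hexpu⟩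
    · exact ⟨u, hpos, by nlinarith [Real.pi_pos], hexpu⟩
  have htne : t ≠ 0 := ht0.ne'
  set δ₁ : unitInterval → X := fun s => f (a * Circle.exp ((s : ℝ) * t)) with hδ₁
  set δ₂ : unitInterval → X := fun s => f (a * Circle.exp ((s : ℝ) * (t - 2 * π))) with hδ₂
  have key : ∀ s : unitInterval, ((s : ℝ)) ∈ Icc (0:ℝ) 1 := fun s => s.2
  refine ⟨δ₁, δ₂, ?_, ?_, ?_, ?_, ?_, ?_, ?_, ?_, ?_, ?_⟩
  · exact hc.comp (continuous_const.mul (Circle.exp.continuous.comp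
      (continuous_subtype_val.mul continuous_const)))
  · intro s s' h
    have h2 := hi h
    have h3 := mul_left_cancel h2
    exact Subtype.ext (circ_exp_inj_aux htne (by rw [abs_of_pos ht0]; exact ht2)
      (key s) (key s') h3)
  · exact hc.comp (continuous_const.mul (Circle.exp.continuous.comp
      (continuous_subtype_val.mul continuous_const)))
  · intro s s' h
    have h2 := hi h
    have h3 := mul_left_cancel h2
    exact Subtype.ext (circ_exp_inj_aux (by intro h; nlinarith [Real.two_pi_pos])
      (by rw [abs_of_neg (by linarith)]; linarith) (key s) (key s') h3)
  · simp [hδ₁]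
  · simp only [hδ₁, Set.Icc.coe_one, one_mul, hexpt, mul_inv_cancel_left]
  · simp [hδ₂]
  · simp only [hδ₂, Set.Icc.coe_one, one_mul, Circle.exp_sub_two_pi, hexpt,
      mul_inv_cancel_left]
  · ext x
    constructor
    · rintro (⟨s, rfl⟩ | ⟨s, rfl⟩) <;> exact Set.mem_range_self _
    · rintro ⟨w, rfl⟩
      rcases circ_surj_aux ht0 ht2 (a⁻¹ * w) with ⟨s, hs, h⟩ | ⟨s, hs, h⟩
      · exact Or.inl ⟨⟨s, hs⟩, by simp [hδ₁, h, mul_inv_cancel_left]⟩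
      · exact Or.inr ⟨⟨s, hs⟩, by simp [hδ₂, h, mul_inv_cancel_left]⟩
  · ext x
    constructor
    · rintro ⟨⟨s, rfl⟩, ⟨s', hs'⟩⟩
      have h3 := mul_left_cancel (hi hs')
      rcases circ_inter_aux ht0 ht2 (key s) (key s') h3.symm with ⟨e1, e2⟩ | ⟨e1, e2⟩
      · left; simp [hδ₁, e1]
      · right; simp [hδ₁, e1, hexpt, mul_inv_cancel_left]
    · rintro (rfl | rfl)
      · exact ⟨⟨0, by simp [hδ₁]⟩, ⟨0, by simp [hδ₂]⟩⟩
      · refine ⟨⟨1, ?_⟩, ⟨1, ?_⟩⟩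
        · simp only [hδ₁, Set.Icc.coe_one, one_mul, hexpt, mul_inv_cancel_left]
        · simp only [hδ₂, Set.Icc.coe_one, one_mul, Circle.exp_sub_two_pi, hexpt,
            mul_inv_cancel_left]
end

section
/- Let X be a topological space, let f : Circle → X be a continuous injective map, and let A, B, C be pairwise distinct points of range f. Then each of the three points is between the other two within range f: A is between B and C within range f, B is between A and C within range f, and C is between A and B within range f. (Paper's Theorem 1.9: every one of three points of a ring is between the other two within the set of the ring.) -/
open Real Set

/-- Every point of the circle distinct from `a` is `a * exp β` with `β ∈ (0, 2π)`. -/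
lemma exists_rep (a b : Circle) (h : b ≠ a) :
    ∃ β : ℝ, 0 < β ∧ β < 2 * π ∧ a * Circle.exp β = b := by
  set c : Circle := a⁻¹ * b with hc
  have hc1 : c ≠ 1 := by
    intro h1
    have h2 := congrArg (a * ·) h1
    have h3 : b = a := by simpa [hc, mul_assoc] using h2
    exact h h3
  have hargc : Circle.exp (Complex.arg c) = c := Circle.exp_arg c
  have harg_ne : Complex.arg (c : ℂ) ≠ 0 := by
    intro h0
    rw [h0, Circle.exp_zero] at hargc
    exact hc1 hargc.symm
  have h1 : -π < Complex.arg (c : ℂ) := Complex.neg_pi_lt_arg _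
  have h2 : Complex.arg (c : ℂ) ≤ π := Complex.arg_le_pi _
  have hpi : (0:ℝ) < π := Real.pi_pos
  by_cases hpos : 0 < Complex.arg (c : ℂ)
  · refine ⟨Complex.arg (c : ℂ), hpos, by linarith, ?_⟩
    rw [hargc, hc]
    simp [mul_assoc]
  · have hneg : Complex.arg (c : ℂ) < 0 := lt_of_le_of_ne (not_lt.mp hpos) harg_ne
    refine ⟨Complex.arg (c : ℂ) + 2 * π, ?_, ?_, ?_⟩
    · linarith
    · linarith
    · rw [Circle.exp_add_two_pi, hargc, hc]
      simp [mul_assoc]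

lemma inj_aux (a : Circle) (c k : ℝ) (hk : k ≠ 0) (hk2 : |k| < 2 * π) :
    Function.Injective fun t : unitInterval => a * Circle.exp (c + k * t) := by
  intro s t hst
  have h : Circle.exp (c + k * s) = Circle.exp (c + k * t) := by
    have := congrArg (a⁻¹ * ·) hst
    simpa [mul_assoc] using this
  obtain ⟨m, hm⟩ := Circle.exp_eq_exp.mp h
  have hks : k * ((s : ℝ) - t) = m * (2 * π) := by linarith
  have hst' : |(s : ℝ) - t| ≤ 1 := by
    have hs1 := s.2.1; have hs2 := s.2.2; have ht1 := t.2.1; have ht2 := t.2.2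
    rw [abs_le]; constructor <;> linarith
  have habs : |(m : ℝ)| * (2 * π) < 1 * (2 * π) := by
    have heq : |(m : ℝ)| * |(2 * π : ℝ)| = |k| * |(s : ℝ) - t| := by
      rw [← abs_mul, ← abs_mul, hks]
    rw [abs_of_pos (by positivity : (0:ℝ) < 2 * π)] at heq
    calc |(m : ℝ)| * (2 * π) = |k| * |(s : ℝ) - t| := heq
      _ ≤ |k| * 1 := mul_le_mul_of_nonneg_left hst' (abs_nonneg k)
      _ < 1 * (2 * π) := by rw [mul_one, one_mul]; exact hk2
  have hm0 : m = 0 := by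
    have h1 : |(m : ℝ)| < 1 := lt_of_mul_lt_mul_right habs (by positivity)
    by_contra hne
    have : (1:ℝ) ≤ |(m : ℝ)| := by
      have : (1:ℤ) ≤ |m| := Int.one_le_abs hne
      calc (1:ℝ) = ((1:ℤ):ℝ) := by norm_num
        _ ≤ ((|m|:ℤ):ℝ) := by exact_mod_cast this
        _ = |(m:ℝ)| := by push_cast; ring
    linarith
  rw [hm0] at hks
  push_cast at hks
  have : (s : ℝ) - t = 0 := by
    rcases mul_eq_zero.mp (by linarith : k * ((s:ℝ) - t) = 0) with h | h
    · exact absurd h hk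
    · exact h
  exact Subtype.ext (by linarith)

/-- Core construction on the circle, in the case where the two representatives are ordered. -/
lemma core' (a : Circle) (β γ : ℝ) (hβ0 : 0 < β) (hβγ : β < γ) (hγ : γ < 2 * π) :
    ∃ γ₁ γ₂ : unitInterval → Circle,
      Continuous γ₁ ∧ Function.Injective γ₁ ∧
      Continuous γ₂ ∧ Function.Injective γ₂ ∧
      γ₁ 0 = a * Circle.exp β ∧ γ₁ 1 = a ∧ γ₂ 0 = a ∧ γ₂ 1 = a * Circle.exp γ ∧
      Set.range γ₁ ∩ Set.range γ₂ = {a} := by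
  have hpi : (0:ℝ) < π := Real.pi_pos
  refine ⟨fun t => a * Circle.exp (β + (-β) * t),
          fun t => a * Circle.exp (0 + (-(2 * π - γ)) * t), ?_, ?_, ?_, ?_, ?_, ?_, ?_, ?_, ?_⟩
  · exact continuous_const.mul (Circle.exp.continuous.comp (by continuity))
  · exact inj_aux a β (-β) (by linarith) (by rw [abs_of_neg (by linarith)]; linarith)
  · exact continuous_const.mul (Circle.exp.continuous.comp (by continuity))
  · exact inj_aux a 0 (-(2 * π - γ)) (by linarith) (by rw [abs_of_neg (by linarith)]; linarith)
  · norm_num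
  · norm_num [Circle.exp_zero]
  · norm_num [Circle.exp_zero]
  · norm_num
  · apply Set.Subset.antisymm
    · rintro x ⟨⟨s, hs⟩, ⟨t, ht⟩⟩
      have h : Circle.exp (β + (-β) * s) = Circle.exp (0 + (-(2 * π - γ)) * t) := by
        have := hs.trans ht.symm
        have := congrArg (a⁻¹ * ·) this
        simpa [mul_assoc] using this
      obtain ⟨m, hm⟩ := Circle.exp_eq_exp.mp h
      -- β(1-s) + (2π-γ)t = m * 2π
      have hkey : β * (1 - (s:ℝ)) + (2 * π - γ) * (t:ℝ) = m * (2 * π) := by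
        linarith
      have hs1 := s.2.1; have hs2 := s.2.2; have ht1 := t.2.1; have ht2 := t.2.2
      have hlb : (0:ℝ) ≤ m * (2 * π) := by
        rw [← hkey]; nlinarith
      have hub : (m:ℝ) * (2 * π) < 2 * π := by
        rw [← hkey]
        nlinarith
      have hm0 : m = 0 := by
        by_contra hne
        rcases lt_or_gt_of_ne hne with h | h
        · have : (m:ℝ) ≤ -1 := by exact_mod_cast Int.le_of_lt_add_one (by omega : m < -1 + 1)
          nlinarith
        · have : (1:ℝ) ≤ m := by exact_mod_cast h
          nlinarith
      rw [hm0] at hkey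
      push_cast at hkey
      have h1 : β * (1 - (s:ℝ)) = 0 := by nlinarith
      have h2 : (2 * π - γ) * (t:ℝ) = 0 := by nlinarith
      have hs' : (s:ℝ) = 1 := by
        rcases mul_eq_zero.mp h1 with h | h
        · linarith
        · linarith
      have hx : a * Circle.exp (β + (-β) * (s:ℝ)) = a := by
        rw [show β + (-β) * (s:ℝ) = β * (1 - (s:ℝ)) by ring, h1, Circle.exp_zero, mul_one]
      exact hs ▸ hx
    · rintro x rfl
      constructor
      · exact ⟨1, by norm_num [Circle.exp_zero]⟩
      · exact ⟨0, by norm_num [Circle.exp_zero]⟩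

/-- Core construction: for distinct points `a b c` of the circle, there are injective paths
`b → a` and `a → c` meeting only at `a`. -/
lemma core (a b c : Circle) (hab : a ≠ b) (hac : a ≠ c) (hbc : b ≠ c) :
    ∃ γ₁ γ₂ : unitInterval → Circle,
      Continuous γ₁ ∧ Function.Injective γ₁ ∧
      Continuous γ₂ ∧ Function.Injective γ₂ ∧
      γ₁ 0 = b ∧ γ₁ 1 = a ∧ γ₂ 0 = a ∧ γ₂ 1 = c ∧
      Set.range γ₁ ∩ Set.range γ₂ = {a} := by
  obtain ⟨β, hβ0, hβ2, hβ⟩ := exists_rep a b hab.symm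
  obtain ⟨γ, hγ0, hγ2, hγ⟩ := exists_rep a c hac.symm
  have hβγ : β ≠ γ := by
    intro h; apply hbc; rw [← hβ, ← hγ, h]
  rcases lt_or_gt_of_ne hβγ with h | h
  · obtain ⟨γ₁, γ₂, c1, i1, c2, i2, e1, e2, e3, e4, hint⟩ := core' a β γ hβ0 h hγ2
    rw [hβ] at e1; rw [hγ] at e4
    exact ⟨γ₁, γ₂, c1, i1, c2, i2, e1, e2, e3, e4, hint⟩
  · obtain ⟨γ₁, γ₂, c1, i1, c2, i2, e1, e2, e3, e4, hint⟩ := core' a γ β hγ0 h hβ2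
    rw [hγ] at e1; rw [hβ] at e4
    -- reverse both paths and swap them
    have hsurj : Function.Surjective unitInterval.symm :=
      fun x => ⟨unitInterval.symm x, unitInterval.symm_symm x⟩
    have hinj : Function.Injective unitInterval.symm := fun x y hxy => by
      rw [← unitInterval.symm_symm x, hxy, unitInterval.symm_symm]
    refine ⟨fun t => γ₂ (unitInterval.symm t), fun t => γ₁ (unitInterval.symm t),
      c2.comp unitInterval.continuous_symm, i2.comp hinj,
      c1.comp unitInterval.continuous_symm, i1.comp hinj,
      ?_, ?_, ?_, ?_, ?_⟩
    · simpa using e4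
    · simpa using e3
    · simpa using e2
    · simpa using e1
    · have h1 : (Set.range fun t => γ₂ (unitInterval.symm t)) = Set.range γ₂ := by
        rw [show (fun t => γ₂ (unitInterval.symm t)) = γ₂ ∘ unitInterval.symm from rfl,
          Set.range_comp, hsurj.range_eq, Set.image_univ]
      have h2 : (Set.range fun t => γ₁ (unitInterval.symm t)) = Set.range γ₁ := by
        rw [show (fun t => γ₁ (unitInterval.symm t)) = γ₁ ∘ unitInterval.symm from rfl,
          Set.range_comp, hsurj.range_eq, Set.image_univ]
      rw [h1, h2, Set.inter_comm]
      exact hint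

lemma mid {X : Type*} [TopologicalSpace X]
    (f : Circle → X) (hc : Continuous f) (hi : Function.Injective f)
    (a b c : Circle) (hab : a ≠ b) (hac : a ≠ c) (hbc : b ≠ c) :
    IsBetweenWithin (Set.range f) (f b) (f a) (f c) := by
  obtain ⟨γ₁, γ₂, c1, i1, c2, i2, e1, e2, e3, e4, hint⟩ := core a b c hab hac hbc
  refine ⟨f ∘ γ₁, f ∘ γ₂, hc.comp c1, hi.comp i1, hc.comp c2, hi.comp i2,
    by simp [e1], by simp [e2], by simp [e3], by simp [e4], ?_, ?_, ?_⟩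
  · rintro x ⟨t, rfl⟩; exact ⟨γ₁ t, rfl⟩
  · rintro x ⟨t, rfl⟩; exact ⟨γ₂ t, rfl⟩
  · rw [Set.range_comp, Set.range_comp, ← Set.image_inter hi, hint, Set.image_singleton]

/-- Paper's Theorem 1.9: every one of three points of a ring is between the other two
within the set of the ring. -/
theorem ring_each_of_three_isBetween {X : Type*} [TopologicalSpace X]
    (f : Circle → X) (hc : Continuous f) (hi : Function.Injective f)
    (A B C : X) (hA : A ∈ Set.range f) (hB : B ∈ Set.range f) (hC : C ∈ Set.range f)
    (hAB : A ≠ B) (hAC : A ≠ C) (hBC : B ≠ C) :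
    IsBetweenWithin (Set.range f) B A C ∧
    IsBetweenWithin (Set.range f) A B C ∧
    IsBetweenWithin (Set.range f) A C B := by
  obtain ⟨a, rfl⟩ := hA
  obtain ⟨b, rfl⟩ := hB
  obtain ⟨c, rfl⟩ := hC
  have hab : a ≠ b := fun h => hAB (by rw [h])
  have hac : a ≠ c := fun h => hAC (by rw [h])
  have hbc : b ≠ c := fun h => hBC (by rw [h])
  exact ⟨mid f hc hi a b c hab hac hbc,
         mid f hc hi b a c hab.symm hbc hac,
         mid f hc hi c a b hac.symm hbc.symm hab⟩
end

section
/- Let X be a Hausdorff topological space and let γ : [0,1] → X be an injective path. Then there is no continuous injective map f : Circle → X with range f ⊆ range γ. In particular, there is no continuous injective map from Circle to ℝ. (Paper's Theorem 1.10: no set of points which forms a ring is within a fundamental line.) -/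
/-!
For a continuous map `f` from a connected space with a continuous involution `σ` to a linear
order, the values `f x` and `f (σ x)` swap order between the points `x` and `σ x`, so by the
intermediate value theorem `f (σ y) = f y` for some `y`. On the circle `σ = -·` has no fixed
point, so no continuous map from the circle to a linear order is injective. An injective path
from the compact `[0,1]` into a Hausdorff space is an embedding, so a ring inside its arc would
lift to such a map into `[0,1]`.
-/

open Function Topology

theorem exists_apply_involutive_eq_apply {α β : Type*} [TopologicalSpace α] [ConnectedSpace α]
    [LinearOrder β] [TopologicalSpace β] [OrderClosedTopology β]
    {σ : α → α} (hσ : Involutive σ) (hσc : Continuous σ) {f : α → β} (hf : Continuous f) :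
    ∃ y, f (σ y) = f y := by
  obtain ⟨x⟩ : Nonempty α := inferInstance
  rcases le_total (f (σ x)) (f x) with h | h
  · exact intermediate_value_univ₂ (b := σ x) (hf.comp hσc) hf h (by simpa [hσ x])
  · exact (intermediate_value_univ₂ (b := σ x) hf (hf.comp hσc) h (by simpa [hσ x])).imp
      fun _ ↦ Eq.symm

theorem Circle.not_injective_of_continuous {β : Type*} [LinearOrder β] [TopologicalSpace β]
    [OrderClosedTopology β] {f : Circle → β} (hf : Continuous f) : ¬ Injective f := by
  intro hfi
  obtain ⟨z, hz⟩ := exists_apply_involutive_eq_apply neg_involutive continuous_neg hf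
  exact Circle.neg_ne_self z (hfi hz)

theorem Topology.IsEmbedding.exists_continuous_comp_eq_s10 {α β γ : Type*} [TopologicalSpace α]
    [TopologicalSpace β] [TopologicalSpace γ] {e : β → γ} (he : IsEmbedding e) {f : α → γ}
    (hf : Continuous f) (hfe : Set.range f ⊆ Set.range e) :
    ∃ g : α → β, Continuous g ∧ e ∘ g = f := by
  choose g hg using fun a ↦ hfe ⟨a, rfl⟩
  have hcomp : e ∘ g = f := funext hg
  exact ⟨g, he.continuous_iff.mpr (hcomp ▸ hf), hcomp⟩

/-- Paper's Theorem 1.10: no set of points which forms a ring is within a fundamental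
line; in particular there is no continuous injective map from the circle to `ℝ`. -/
theorem no_ring_within_arc {X : Type*} [TopologicalSpace X] [T2Space X]
    (γ : unitInterval → X) (hc : Continuous γ) (hi : Function.Injective γ) :
    (¬ ∃ f : Circle → X, Continuous f ∧ Function.Injective f ∧
        Set.range f ⊆ Set.range γ) ∧
    (¬ ∃ f : Circle → ℝ, Continuous f ∧ Function.Injective f) := by
  refine ⟨?_, fun ⟨f, hf, hfi⟩ ↦ Circle.not_injective_of_continuous hf hfi⟩
  rintro ⟨f, hf, hfi, hfγ⟩
  obtain ⟨g, hg, rfl⟩ := (hc.isClosedEmbedding hi).isEmbedding.exists_continuous_comp_eq_s10 hf hfγ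
  exact Circle.not_injective_of_continuous hg hfi.of_comp
end

section
/- Let X be a topological space, let U and V be disjoint open subsets of X, and let f : [0,1] → X be continuous with f 0 ∈ U, f 1 ∈ V, and range f ⊆ closure U ∪ closure V. Then there exists t ∈ [0,1] with f t ∈ frontier U ∩ frontier V. (Paper's Theorem 2.13: given two fundamental areas having in common only boundary points, any fundamental line wholly within them containing a non-boundary point of each must contain a common boundary point of the two areas.) -/
/-- Paper's Theorem 2.13: given two fundamental areas having in common only boundary
points, any fundamental line wholly within them containing a non-boundary point of
each must contain a common boundary point of the two areas. -/
theorem path_between_regions_meets_common_frontier {X : Type*} [TopologicalSpace X]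
    (U V : Set X) (hU : IsOpen U) (hV : IsOpen V) (hUV : Disjoint U V)
    (f : unitInterval → X) (hc : Continuous f)
    (h0 : f 0 ∈ U) (h1 : f 1 ∈ V)
    (hrange : Set.range f ⊆ closure U ∪ closure V) :
    ∃ t : unitInterval, f t ∈ frontier U ∩ frontier V := by
  have hpre : IsPreconnected (Set.univ : Set unitInterval) :=
    isPreconnected_univ
  rw [isPreconnected_closed_iff] at hpre
  have hA : IsClosed (f ⁻¹' closure U) := (isClosed_closure).preimage hc
  have hB : IsClosed (f ⁻¹' closure V) := (isClosed_closure).preimage hc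
  have hcov : (Set.univ : Set unitInterval) ⊆ f ⁻¹' closure U ∪ f ⁻¹' closure V := by
    intro t _
    rcases hrange ⟨t, rfl⟩ with h | h
    · exact Or.inl h
    · exact Or.inr h
  obtain ⟨t, -, htU, htV⟩ := hpre _ _ hA hB hcov
    ⟨0, Set.mem_univ _, subset_closure h0⟩ ⟨1, Set.mem_univ _, subset_closure h1⟩
  have hdUV : Disjoint U (closure V) := hUV.closure_right hU
  have hdVU : Disjoint (closure U) V := (hUV.symm.closure_right hV).symm
  refine ⟨t, ⟨htU, ?_⟩, htV, ?_⟩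
  · intro hmem
    exact hdUV.ne_of_mem (interior_subset hmem) htV rfl
  · intro hmem
    exact hdVU.ne_of_mem htU (interior_subset hmem) rfl
end
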